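/- Let 𝒞=(C,w) be a positive-weighted tree with V(C)={1,...,n} and let a,b be two vertices such that D_{a,b}(𝒞) − t_a − t_b = max_{i,j ∈ [n]} { D_{i,j}(𝒞) − t_i − t_j }. Then C is a caterpillar if and only if for all distinct i,j ∈ {1,...,n}∖{a,b} one has D_{a,b}(𝒞)+D_{i,j}(𝒞) ≥ max{ D_{a,i}(𝒞)+D_{b,j}(𝒞), D_{a,j}(𝒞)+D_{b,i}(𝒞) }. -/

import Mathlib

open SimpleGraph

variable {V : Type*}

/-- weight of a walk: sum of the weights of its edges -/
noncomputable def walkWeight (G : SimpleGraph V) (w : Sym2 V → ℝ) {i j : V} (p : G.Walk i j) : ℝ :=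
  (p.edges.map w).sum

/-- the 2-weight: min over paths joining i and j -/
noncomputable def wdist (G : SimpleGraph V) (w : Sym2 V → ℝ) (i j : V) : ℝ :=
  sInf {x : ℝ | ∃ p : G.Walk i j, p.IsPath ∧ walkWeight G w p = x}

def Realizes (G : SimpleGraph V) (w : Sym2 V → ℝ) {i j : V} (p : G.Walk i j) : Prop :=
  p.IsPath ∧ walkWeight G w p = wdist G w i j

def UsefulEdge (G : SimpleGraph V) (w : Sym2 V → ℝ) (e : Sym2 V) : Prop :=
  ∃ a b : V, a ≠ b ∧ ∀ p : G.Walk a b, Realizes G w p → e ∈ p.edges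

def Pruned (G : SimpleGraph V) (w : Sym2 V → ℝ) : Prop :=
  ∀ e ∈ G.edgeSet, UsefulEdge G w e

def PosWeights (G : SimpleGraph V) (w : Sym2 V → ℝ) : Prop :=
  ∀ e ∈ G.edgeSet, 0 < w e

def Indec (G : SimpleGraph V) (w : Sym2 V → ℝ) (i j : V) : Prop :=
  ∀ z : V, z ≠ i → z ≠ j → wdist G w i j < wdist G w i z + wdist G w z j

def IsLeaf (G : SimpleGraph V) (v : V) : Prop := (G.neighborSet v).ncard = 1

def IsSnake (G : SimpleGraph V) : Prop :=
  G.IsTree ∧ {v : V | IsLeaf G v}.ncard = 2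

def IsCaterpillar (G : SimpleGraph V) : Prop :=
  G.IsTree ∧ ∃ (x₁ x₂ : V) (p : G.Walk x₁ x₂), p.IsPath ∧
    {v : V | v ∈ p.support} = {v : V | 2 ≤ (G.neighborSet v).ncard}

def IsPolygon {n : ℕ} [NeZero n] (G : SimpleGraph (Fin n)) : Prop :=
  ∃ σ : Equiv.Perm (Fin n), G.edgeSet = Set.range (fun i : Fin n => s(σ i, σ (i + 1)))

noncomputable def tmin (G : SimpleGraph V) (w : Sym2 V → ℝ) (x : V) : ℝ :=
  (1 / 2) * sInf {r : ℝ | ∃ y z : V, y ≠ x ∧ z ≠ x ∧ y ≠ z ∧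
    r = wdist G w x y + wdist G w x z - wdist G w y z}

def IsBipartiteOn (G : SimpleGraph V) (X Y : Set V) : Prop :=
  X ∩ Y = ∅ ∧ X ∪ Y = Set.univ ∧ ∀ a b : V, G.Adj a b → (a ∈ X ∧ b ∈ Y) ∨ (a ∈ Y ∧ b ∈ X)

noncomputable def chainSum {α : Type*} (D : α → α → ℝ) : List α → ℝ
  | [] => 0
  | [_] => 0
  | a :: b :: l => D a b + chainSum D (b :: l)

def FIndec {n : ℕ} (D : Fin n → Fin n → ℝ) (i j : Fin n) : Prop :=
  ∀ z : Fin n, z ≠ i → z ≠ j → D i j < D i z + D z j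

def TriangleIneq {n : ℕ} (D : Fin n → Fin n → ℝ) : Prop :=
  ∀ i j k : Fin n, i ≠ j → j ≠ k → i ≠ k → D i j ≤ D i k + D k j

def MaxTwice (x y z : ℝ) : Prop :=
  (x = y ∧ z ≤ x) ∨ (x = z ∧ y ≤ x) ∨ (y = z ∧ x ≤ y)

def FourPoint {n : ℕ} (D : Fin n → Fin n → ℝ) : Prop :=
  ∀ i j k h : Fin n, i ≠ j → i ≠ k → i ≠ h → j ≠ k → j ≠ h → k ≠ h →
    MaxTwice (D i j + D k h) (D i k + D j h) (D i h + D k j)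

def MedianFamily {n : ℕ} (D : Fin n → Fin n → ℝ) : Prop :=
  ∀ a b c : Fin n, ∃! m : Fin n,
    ∀ i ∈ ({a, b, c} : Set (Fin n)), ∀ j ∈ ({a, b, c} : Set (Fin n)), i ≠ j →
      D i j = D i m + D j m

noncomputable def tminF {n : ℕ} (D : Fin n → Fin n → ℝ) (x : Fin n) : ℝ :=
  (1 / 2) * sInf {r : ℝ | ∃ y z : Fin n, y ≠ x ∧ z ≠ x ∧ y ≠ z ∧ r = D x y + D x z - D y z}

def interiorSet {G : SimpleGraph V} {u v : V} (p : G.Walk u v) : Set V :=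
  {x : V | x ∈ p.support ∧ x ≠ u ∧ x ≠ v}

/-!
Every vertex `x` of a tree with at least three vertices has a gate `g x`, the internal vertex
through which all paths leaving `x` run (`x` itself, or the neighbour of a leaf `x`). Then
`t_x = D(x, g x)` and `D(i, j) - t_i - t_j = D(g i, g j)`, so the maximality of `(a, b)` says that
`g a, g b` is a diametral pair of internal vertices, and an internal vertex lies between `a` and `b`
iff it lies between `g a` and `g b`.

If `C` is a caterpillar, the ends of its spine are internal vertices beyond which no internal vertex
lies, so the spine runs from `g a` to `g b`; hence `g i` lies between `a` and `b` as well as between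
`i` and `j`, and the inequality follows from triangle inequalities through `g i`. Conversely, if an
internal vertex `c` were off the path from `a` to `b`, a neighbour `j` of `c` with `c` between `j`
and `b` would violate the inequality for `(c, j)`; so all internal vertices lie on the path from
`g a` to `g b`, which is then a spine.
-/

theorem List.Sublist.sum_map_lt_sum_map {α M : Type*} [AddCommMonoid M] [PartialOrder M]
    [IsOrderedCancelAddMonoid M] {f : α → M} {l₁ l₂ : List α} (h : l₁.Sublist l₂)
    (hf : ∀ x ∈ l₂, 0 < f x) {e : α} (he₂ : e ∈ l₂) (he₁ : e ∉ l₁) :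
    (l₁.map f).sum < (l₂.map f).sum := by
  induction h with
  | slnil => simp at he₂
  | @cons l₁ l₂ a h _ =>
    have hle : (l₁.map f).sum ≤ (l₂.map f).sum :=
      (h.map f).sum_le_sum fun x hx => by
        obtain ⟨y, hy, rfl⟩ := List.mem_map.mp hx
        exact (hf y (List.mem_cons_of_mem a hy)).le
    simpa using add_lt_add_of_lt_of_le (hf a List.mem_cons_self) hle
  | cons_cons a _ ih =>
    have hea : e ≠ a := fun h => he₁ (h ▸ List.mem_cons_self)
    simpa using ih (fun x hx => hf x (List.mem_cons_of_mem a hx))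
      ((List.mem_cons.mp he₂).resolve_left hea) (fun h => he₁ (List.mem_cons_of_mem a h))

section

variable {G : SimpleGraph V} {w : Sym2 V → ℝ}

theorem walkWeight_append {i j k : V} (p : G.Walk i j) (q : G.Walk j k) :
    walkWeight G w (p.append q) = walkWeight G w p + walkWeight G w q := by
  simp [walkWeight, Walk.edges_append]

theorem walkWeight_nonneg (hw : PosWeights G w) {i j : V} (p : G.Walk i j) :
    0 ≤ walkWeight G w p :=
  List.sum_nonneg fun _ hx => by
    obtain ⟨e, he, rfl⟩ := List.mem_map.mp hx
    exact (hw e (p.edges_subset_edgeSet he)).le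

theorem walkWeight_bypass_le [DecidableEq V] (hw : PosWeights G w) {i j : V} (p : G.Walk i j) :
    walkWeight G w p.bypass ≤ walkWeight G w p :=
  (p.edges_bypass_sublist_edges.map w).sum_le_sum fun _ hx => by
    obtain ⟨e, he, rfl⟩ := List.mem_map.mp hx
    exact (hw e (p.edges_subset_edgeSet he)).le

theorem walkWeight_bypass_lt [DecidableEq V] (hw : PosWeights G w) {i j m : V} (p : G.Walk i j)
    (hm : m ∈ p.support) (hm' : m ∉ p.bypass.support) :
    walkWeight G w p.bypass < walkWeight G w p := by
  obtain rfl | ⟨e, he, hme⟩ := Walk.mem_support_iff_exists_mem_edges.mp hm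
  · exact absurd p.bypass.end_mem_support hm'
  exact p.edges_bypass_sublist_edges.sum_map_lt_sum_map
    (fun e he => hw e (p.edges_subset_edgeSet he)) he
    (fun he' => hm' (Walk.mem_support_of_mem_edges he' hme))

theorem wdist_eq_walkWeight (ht : G.IsTree) {i j : V} {p : G.Walk i j} (hp : p.IsPath) :
    wdist G w i j = walkWeight G w p := by
  have hset : {x : ℝ | ∃ q : G.Walk i j, q.IsPath ∧ walkWeight G w q = x} =
      {walkWeight G w p} := by
    ext x
    constructor
    · rintro ⟨q, hq, rfl⟩
      rw [(ht.existsUnique_path i j).unique hq hp, Set.mem_singleton_iff]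
    · rintro rfl
      exact ⟨p, hp, rfl⟩
  rw [wdist, hset, csInf_singleton]

theorem wdist_self (ht : G.IsTree) (i : V) : wdist G w i i = 0 := by
  simp [wdist_eq_walkWeight ht Walk.IsPath.nil, walkWeight]

theorem wdist_comm (ht : G.IsTree) (i j : V) : wdist G w i j = wdist G w j i := by
  obtain ⟨p, hp, -⟩ := ht.existsUnique_path i j
  rw [wdist_eq_walkWeight ht hp, wdist_eq_walkWeight ht hp.reverse]
  simp [walkWeight, List.sum_reverse]

theorem wdist_nonneg (ht : G.IsTree) (hw : PosWeights G w) (i j : V) : 0 ≤ wdist G w i j := by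
  obtain ⟨p, hp, -⟩ := ht.existsUnique_path i j
  exact wdist_eq_walkWeight ht hp ▸ walkWeight_nonneg hw p

theorem wdist_pos (ht : G.IsTree) (hw : PosWeights G w) {i j : V} (hij : i ≠ j) :
    0 < wdist G w i j := by
  obtain ⟨p, hp, -⟩ := ht.existsUnique_path i j
  rw [wdist_eq_walkWeight ht hp]
  have hnil : ¬p.Nil := Walk.not_nil_of_ne hij
  simpa [walkWeight] using List.Sublist.sum_map_lt_sum_map (List.nil_sublist _)
    (fun e he => hw e (p.edges_subset_edgeSet he)) (Walk.mk_start_snd_mem_edges hnil)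
    List.not_mem_nil

theorem eq_of_wdist_nonpos (ht : G.IsTree) (hw : PosWeights G w) {i j : V}
    (h : wdist G w i j ≤ 0) : i = j := by
  by_contra hij
  exact (wdist_pos ht hw hij).not_ge h

theorem wdist_triangle (ht : G.IsTree) (hw : PosWeights G w) (i k j : V) :
    wdist G w i j ≤ wdist G w i k + wdist G w k j := by
  classical
  obtain ⟨p, hp, -⟩ := ht.existsUnique_path i k
  obtain ⟨q, hq, -⟩ := ht.existsUnique_path k j
  rw [wdist_eq_walkWeight ht hp, wdist_eq_walkWeight ht hq,
    wdist_eq_walkWeight ht (p.append q).bypass_isPath, ← walkWeight_append]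
  exact walkWeight_bypass_le hw _

theorem wdist_eq_add_of_mem_support (ht : G.IsTree) {i j m : V} {p : G.Walk i j}
    (hp : p.IsPath) (hm : m ∈ p.support) :
    wdist G w i j = wdist G w i m + wdist G w m j := by
  classical
  rw [wdist_eq_walkWeight ht hp, wdist_eq_walkWeight ht (hp.takeUntil hm),
    wdist_eq_walkWeight ht (hp.dropUntil hm), ← walkWeight_append, p.take_spec hm]

theorem mem_support_of_wdist_eq_add (ht : G.IsTree) (hw : PosWeights G w) {i j m : V}
    {p : G.Walk i j} (hp : p.IsPath) (h : wdist G w i j = wdist G w i m + wdist G w m j) :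
    m ∈ p.support := by
  classical
  by_contra hm
  obtain ⟨q, hq, -⟩ := ht.existsUnique_path i m
  obtain ⟨r, hr, -⟩ := ht.existsUnique_path m j
  have hbypass : (q.append r).bypass = p :=
    (ht.existsUnique_path i j).unique (q.append r).bypass_isPath hp
  have hlt := walkWeight_bypass_lt hw (q.append r)
    (Walk.mem_support_append_iff _ _ |>.mpr (Or.inr r.start_mem_support)) (hbypass ▸ hm)
  rw [hbypass, walkWeight_append, ← wdist_eq_walkWeight ht hp, ← wdist_eq_walkWeight ht hq,
    ← wdist_eq_walkWeight ht hr] at hlt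
  exact hlt.ne h

theorem wdist_eq_add_or_wdist_eq_add (ht : G.IsTree) {s e u v : V} {p : G.Walk s e}
    (hp : p.IsPath) (hu : u ∈ p.support) (hv : v ∈ p.support) :
    wdist G w s v = wdist G w s u + wdist G w u v ∨
      wdist G w s u = wdist G w s v + wdist G w v u := by
  classical
  rw [← p.take_spec hu, Walk.mem_support_append_iff] at hv
  rcases hv with hv | hv
  · exact .inr (wdist_eq_add_of_mem_support ht (hp.takeUntil hu) hv)
  · have hse := wdist_eq_add_of_mem_support (w := w) ht hp hu
    have hue := wdist_eq_add_of_mem_support (w := w) ht (hp.dropUntil hu) hv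
    have hse' := wdist_eq_add_of_mem_support (w := w) ht hp
      ((p.support_dropUntil_subset_support hu) hv)
    exact .inl (by linarith)

theorem eq_snd_of_adj_of_mem_support (ht : G.IsTree) {c x z : V} {p : G.Walk c x}
    (hp : p.IsPath) (hz : G.Adj c z) (hzp : z ∈ p.support) : z = p.snd := by
  classical
  have htake : p.takeUntil z hzp = hz.toWalk :=
    (ht.existsUnique_path c z).unique (hp.takeUntil hzp) hz.isPath_toWalk
  calc z = (hz.toWalk.append (p.dropUntil z hzp)).snd := by simp [Adj.toWalk]
    _ = p.snd := by rw [← htake, p.take_spec hzp]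

theorem wdist_eq_add_of_adj_of_adj (ht : G.IsTree) {y c z : V} (hyc : G.Adj y c)
    (hcz : G.Adj c z) (hyz : y ≠ z) : wdist G w y z = wdist G w y c + wdist G w c z := by
  have hp : (Walk.cons hyc hcz.toWalk).IsPath := by
    simp [Walk.cons_isPath_iff, Adj.toWalk, hyc.ne, hcz.ne, hyz]
  exact wdist_eq_add_of_mem_support ht hp (by simp)

theorem exists_adj_wdist_eq_add (ht : G.IsTree) {c : V} (hc : 2 ≤ (G.neighborSet c).ncard)
    (x : V) : ∃ j, G.Adj c j ∧ wdist G w j x = wdist G w j c + wdist G w c x := by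
  obtain ⟨p, hp, -⟩ := ht.existsUnique_path c x
  obtain ⟨j, hj, hjp⟩ := Set.exists_ne_of_one_lt_ncard hc p.snd
  have hj : G.Adj c j := hj
  have hjs : j ∉ p.support := fun h => hjp (eq_snd_of_adj_of_mem_support ht hp hj h)
  have hjp : (Walk.cons hj.symm p).IsPath := (Walk.cons_isPath_iff hj.symm p).mpr ⟨hp, hjs⟩
  exact ⟨j, hj, wdist_eq_add_of_mem_support ht hjp (by simp)⟩

theorem two_le_ncard_neighborSet_of_mem_support [Finite V] {u v x : V} {p : G.Walk u v}
    (hp : p.IsPath) (hx : x ∈ p.support) (hxu : x ≠ u) (hxv : x ≠ v) :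
    2 ≤ (G.neighborSet x).ncard := by
  obtain ⟨i, rfl, hi⟩ := Walk.mem_support_iff_exists_getVert.mp hx
  have hi0 : i ≠ 0 := by rintro rfl; exact hxu (Walk.getVert_zero p)
  have hil : i < p.length := lt_of_le_of_ne hi (by rintro rfl; exact hxv (Walk.getVert_length p))
  rw [← hp.ncard_neighborSet_toSubgraph_internal_eq_two hi0 hil]
  exact Set.ncard_le_ncard (p.toSubgraph.neighborSet_subset _) (Set.toFinite _)

theorem wdist_eq_add_of_neighborSet_eq_singleton (ht : G.IsTree) {x u y : V}
    (hx : G.neighborSet x = {u}) (hy : y ≠ x) :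
    wdist G w x y = wdist G w x u + wdist G w u y := by
  obtain ⟨p, hp, -⟩ := ht.existsUnique_path x y
  have hnil : ¬p.Nil := Walk.not_nil_of_ne hy.symm
  have hsnd : p.snd = u := by
    simpa [← Set.mem_singleton_iff, ← hx] using p.adj_snd hnil
  exact wdist_eq_add_of_mem_support ht hp
    (hsnd ▸ List.mem_of_mem_tail (p.snd_mem_tail_support hnil))

theorem exists_adj_ne_of_neighborSet_eq_singleton (ht : G.IsTree) (hw : PosWeights G w)
    (hV : 3 ≤ ENat.card V) {x u : V} (hx : G.neighborSet x = {u}) :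
    ∃ z, G.Adj u z ∧ z ≠ x := by
  have hxu : G.Adj x u := by simp [← mem_neighborSet, hx]
  obtain ⟨z, hzx, hzu⟩ := ENat.exists_ne_ne_of_three_le hV x u
  obtain ⟨p, hp, -⟩ := ht.existsUnique_path u z
  have hnil : ¬p.Nil := Walk.not_nil_of_ne hzu.symm
  refine ⟨p.snd, p.adj_snd hnil, fun hsnd => ?_⟩
  -- then `x` lies between `u` and `z`, while `u` lies between `x` and `z`
  have hux := wdist_eq_add_of_mem_support (w := w) ht hp
    (hsnd ▸ List.mem_of_mem_tail (p.snd_mem_tail_support hnil))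
  have hxz := wdist_eq_add_of_neighborSet_eq_singleton (w := w) ht hx hzx
  have hpos := wdist_pos ht hw hxu.ne
  have hcomm := wdist_comm (w := w) ht u x
  linarith

theorem tmin_eq_wdist (ht : G.IsTree) (hw : PosWeights G w) {x g y z : V}
    (hg : ∀ v, v ≠ x → wdist G w x v = wdist G w x g + wdist G w g v)
    (hy : y ≠ x) (hz : z ≠ x) (hyz : y ≠ z)
    (hbetween : wdist G w y z = wdist G w y g + wdist G w g z) :
    tmin G w x = wdist G w x g := by
  set T := {r : ℝ | ∃ y z : V, y ≠ x ∧ z ≠ x ∧ y ≠ z ∧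
    r = wdist G w x y + wdist G w x z - wdist G w y z}
  have hlower : ∀ r ∈ T, 2 * wdist G w x g ≤ r := by
    rintro r ⟨y, z, hy, hz, -, rfl⟩
    have := wdist_triangle ht hw y g z
    have := wdist_comm (w := w) ht y g
    linarith [hg y hy, hg z hz]
  have hmem : 2 * wdist G w x g ∈ T := by
    refine ⟨y, z, hy, hz, hyz, ?_⟩
    have := wdist_comm (w := w) ht y g
    linarith [hg y hy, hg z hz]
  have hinf : sInf T = 2 * wdist G w x g :=
    le_antisymm (csInf_le ⟨_, hlower⟩ hmem) (le_csInf ⟨_, hmem⟩ hlower)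
  rw [tmin, hinf]
  ring

end

structure IsGateMap (G : SimpleGraph V) (w : Sym2 V → ℝ) (g : V → V) : Prop where
  two_le_ncard : ∀ x, 2 ≤ (G.neighborSet (g x)).ncard
  eq_self : ∀ x, 2 ≤ (G.neighborSet x).ncard → g x = x
  wdist_eq : ∀ {x y}, y ≠ x → wdist G w x y = wdist G w x (g x) + wdist G w (g x) y
  tmin_eq : ∀ x, tmin G w x = wdist G w x (g x)

theorem SimpleGraph.Connected.exists_neighborSet_eq_singleton [Finite V] [Nontrivial V]
    {G : SimpleGraph V} (hG : G.Connected) {x : V} (hx : ¬2 ≤ (G.neighborSet x).ncard) :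
    ∃ u, G.neighborSet x = {u} := by
  obtain ⟨u, hxu⟩ := hG.preconnected.exists_adj_of_nontrivial x
  have hpos : 0 < (G.neighborSet x).ncard := (Set.ncard_pos (Set.toFinite _)).mpr ⟨u, hxu⟩
  exact Set.ncard_eq_one.mp (by omega)

theorem exists_isGateMap [Finite V] {G : SimpleGraph V} {w : Sym2 V → ℝ} (ht : G.IsTree)
    (hw : PosWeights G w) (hV : 3 ≤ ENat.card V) : ∃ g, IsGateMap G w g := by
  suffices h : ∀ x, ∃ g, 2 ≤ (G.neighborSet g).ncard ∧
      (2 ≤ (G.neighborSet x).ncard → g = x) ∧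
      (∀ y, y ≠ x → wdist G w x y = wdist G w x g + wdist G w g y) ∧
      tmin G w x = wdist G w x g by
    choose g h₁ h₂ h₃ h₄ using h
    exact ⟨g, h₁, h₂, fun {x y} => h₃ x y, h₄⟩
  intro x
  by_cases hx : 2 ≤ (G.neighborSet x).ncard
  · have hg : ∀ y, y ≠ x → wdist G w x y = wdist G w x x + wdist G w x y := by
      simp [wdist_self ht]
    obtain ⟨y, z, hy, hz, hyz⟩ := (Set.one_lt_ncard_iff (Set.toFinite _)).mp hx
    rw [mem_neighborSet] at hy hz
    exact ⟨x, hx, fun _ => rfl, hg, tmin_eq_wdist ht hw hg hy.ne' hz.ne' hyz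
      (wdist_eq_add_of_adj_of_adj ht hy.symm hz hyz)⟩
  · have : Nontrivial V := by
      obtain ⟨z, hzx, -⟩ := ENat.exists_ne_ne_of_three_le hV x x
      exact ⟨z, x, hzx⟩
    obtain ⟨u, hleaf⟩ := ht.connected.exists_neighborSet_eq_singleton hx
    have hxu : G.Adj x u := by simp [← mem_neighborSet, hleaf]
    obtain ⟨z, huz, hzx⟩ := exists_adj_ne_of_neighborSet_eq_singleton ht hw hV hleaf
    have hu : 2 ≤ (G.neighborSet u).ncard :=
      (Set.one_lt_ncard_iff (Set.toFinite _)).mpr ⟨x, z, hxu.symm, huz, hzx.symm⟩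
    have hg := fun y => wdist_eq_add_of_neighborSet_eq_singleton (w := w) ht hleaf (y := y)
    exact ⟨u, hu, fun h => absurd h hx, hg, tmin_eq_wdist ht hw hg hxu.ne' hzx huz.ne
      (by simp [wdist_self ht])⟩

namespace IsGateMap

variable {G : SimpleGraph V} {w : Sym2 V → ℝ} {g : V → V}

theorem wdist_eq_of_two_le_ncard (hg : IsGateMap G w g) (ht : G.IsTree) (x : V) {y : V}
    (hy : 2 ≤ (G.neighborSet y).ncard) :
    wdist G w x y = wdist G w x (g x) + wdist G w (g x) y := by
  by_cases hyx : y = x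
  · subst hyx
    simp [hg.eq_self y hy, wdist_self ht]
  · exact hg.wdist_eq hyx

theorem wdist_eq_add_add (hg : IsGateMap G w g) (ht : G.IsTree) {a b : V} (hab : a ≠ b) :
    wdist G w a b = wdist G w a (g a) + wdist G w (g a) (g b) + wdist G w (g b) b := by
  have hb := hg.wdist_eq_of_two_le_ncard ht b (hg.two_le_ncard a)
  rw [hg.wdist_eq hab.symm, wdist_comm ht (g a) b, hb, wdist_comm ht b (g b),
    wdist_comm ht (g b) (g a)]
  ring

theorem wdist_sub_tmin_sub_tmin (hg : IsGateMap G w g) (ht : G.IsTree) {a b : V} (hab : a ≠ b) :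
    wdist G w a b - tmin G w a - tmin G w b = wdist G w (g a) (g b) := by
  rw [hg.tmin_eq, hg.tmin_eq, hg.wdist_eq_add_add ht hab, wdist_comm ht b (g b)]
  ring

theorem wdist_le_of_forall_sub_tmin_le (hg : IsGateMap G w g) (ht : G.IsTree)
    (hw : PosWeights G w) {a b : V} (hab : a ≠ b)
    (hmax : ∀ i j : V, i ≠ j →
      wdist G w i j - tmin G w i - tmin G w j ≤ wdist G w a b - tmin G w a - tmin G w b)
    {c c' : V} (hc : 2 ≤ (G.neighborSet c).ncard) (hc' : 2 ≤ (G.neighborSet c').ncard) :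
    wdist G w c c' ≤ wdist G w (g a) (g b) := by
  by_cases hcc' : c = c'
  · rw [hcc', wdist_self ht]
    exact wdist_nonneg ht hw _ _
  · simpa [hg.wdist_sub_tmin_sub_tmin ht hcc', hg.wdist_sub_tmin_sub_tmin ht hab,
      hg.eq_self c hc, hg.eq_self c' hc'] using hmax c c' hcc'

theorem wdist_eq_add_iff (hg : IsGateMap G w g) (ht : G.IsTree) {a b c : V} (hab : a ≠ b)
    (hc : 2 ≤ (G.neighborSet c).ncard) :
    wdist G w a b = wdist G w a c + wdist G w c b ↔
      wdist G w (g a) (g b) = wdist G w (g a) c + wdist G w c (g b) := by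
  have hab' := hg.wdist_eq_add_add ht hab
  have hac := hg.wdist_eq_of_two_le_ncard ht a hc
  have hbc := hg.wdist_eq_of_two_le_ncard ht b hc
  have := wdist_comm (w := w) ht c b
  have := wdist_comm (w := w) ht c (g b)
  have := wdist_comm (w := w) ht (g b) b
  constructor <;> intro h <;> linarith

end IsGateMap

section

variable {G : SimpleGraph V} {w : Sym2 V → ℝ}

theorem IsCaterpillar.wdist_eq_add_of_forall_wdist_le (hG : IsCaterpillar G)
    (hw : PosWeights G w) {u v c : V} (hu : 2 ≤ (G.neighborSet u).ncard)
    (hv : 2 ≤ (G.neighborSet v).ncard)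
    (hmax : ∀ c c', 2 ≤ (G.neighborSet c).ncard → 2 ≤ (G.neighborSet c').ncard →
      wdist G w c c' ≤ wdist G w u v)
    (hc : 2 ≤ (G.neighborSet c).ncard) :
    wdist G w u v = wdist G w u c + wdist G w c v := by
  obtain ⟨ht, x₁, x₂, p, hp, hspine⟩ := hG
  have hmem (y : V) : y ∈ p.support ↔ 2 ≤ (G.neighborSet y).ncard := Set.ext_iff.mp hspine y
  -- if `u` lay between the spine endpoint `x` and `v`, then `D x v ≤ D u v` would force `x = u`
  have hend {x y : V} (q : G.Walk x y) (hq : q.IsPath)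
      (hq' : ∀ z, z ∈ q.support ↔ 2 ≤ (G.neighborSet z).ncard) : x = u ∨ x = v := by
    have hx := (hq' x).1 q.start_mem_support
    rcases wdist_eq_add_or_wdist_eq_add ht hq ((hq' u).2 hu) ((hq' v).2 hv) with h | h
    · exact .inl (eq_of_wdist_nonpos ht hw (by linarith [hmax x v hx hv]))
    · have := wdist_comm (w := w) ht v u
      exact .inr (eq_of_wdist_nonpos ht hw (by linarith [hmax x u hx hu]))
  have h₁ := hend p hp hmem
  have h₂ := hend p.reverse hp.reverse (by simpa using hmem)
  have hc' := wdist_eq_add_of_mem_support (w := w) ht hp ((hmem c).2 hc)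
  have := wdist_triangle ht hw u c v
  have := wdist_triangle ht hw c u v
  have := wdist_triangle ht hw u v c
  have := wdist_nonneg ht hw c u
  have := wdist_nonneg ht hw c v
  have := wdist_comm (w := w) ht u c
  have := wdist_comm (w := w) ht v c
  have := wdist_comm (w := w) ht u v
  have := wdist_self (w := w) ht u
  have := wdist_self (w := w) ht v
  rcases h₁ with h₁ | h₁ <;> rcases h₂ with h₂ | h₂ <;>
    rw [h₁, h₂] at hc' <;> linarith

theorem isCaterpillar_of_forall_wdist_eq_add [Finite V] (ht : G.IsTree) (hw : PosWeights G w)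
    {u v : V} (hu : 2 ≤ (G.neighborSet u).ncard) (hv : 2 ≤ (G.neighborSet v).ncard)
    (h : ∀ c, 2 ≤ (G.neighborSet c).ncard → wdist G w u v = wdist G w u c + wdist G w c v) :
    IsCaterpillar G := by
  obtain ⟨p, hp, -⟩ := ht.existsUnique_path u v
  refine ⟨ht, u, v, p, hp, Set.ext fun c => ⟨fun hc => ?_,
    fun hc => mem_support_of_wdist_eq_add ht hw hp (h c hc)⟩⟩
  by_cases hcu : c = u
  · exact hcu ▸ hu
  by_cases hcv : c = v
  · exact hcv ▸ hv
  exact two_le_ncard_neighborSet_of_mem_support hp hc hcu hcv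

theorem wdist_eq_add_of_forall_max_le (ht : G.IsTree) (hw : PosWeights G w) {a b c : V}
    (h : ∀ i j, i ≠ j → i ≠ a → i ≠ b → j ≠ a → j ≠ b →
      max (wdist G w a i + wdist G w b j) (wdist G w a j + wdist G w b i) ≤
        wdist G w a b + wdist G w i j)
    (hc : 2 ≤ (G.neighborSet c).ncard) :
    wdist G w a b = wdist G w a c + wdist G w c b := by
  by_cases hca : c = a
  · simp [hca, wdist_self ht]
  by_cases hcb : c = b
  · simp [hcb, wdist_self ht]
  obtain ⟨j, hcj, hj⟩ := exists_adj_wdist_eq_add (w := w) ht hc b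
  by_cases hja : j = a
  · rwa [hja] at hj
  have hjb : j ≠ b := by
    rintro rfl
    linarith [wdist_self (w := w) ht j, wdist_pos ht hw hcj.ne', wdist_nonneg ht hw c j]
  have := (le_max_left _ _).trans (h c j hcj.ne hca hcb hja hjb)
  linarith [wdist_comm (w := w) ht b j, wdist_comm (w := w) ht c j,
    wdist_triangle ht hw a c b]

theorem max_add_le_of_wdist_eq_add (ht : G.IsTree) (hw : PosWeights G w) {a b i j m : V}
    (ha : wdist G w a b = wdist G w a m + wdist G w m b)
    (hi : wdist G w i j = wdist G w i m + wdist G w m j) :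
    max (wdist G w a i + wdist G w b j) (wdist G w a j + wdist G w b i) ≤
      wdist G w a b + wdist G w i j := by
  have := wdist_triangle ht hw a m i
  have := wdist_triangle ht hw b m j
  have := wdist_triangle ht hw a m j
  have := wdist_triangle ht hw b m i
  have := wdist_comm (w := w) ht m i
  have := wdist_comm (w := w) ht m b
  exact max_le (by linarith) (by linarith)

end

/-- A positive-weighted tree `C` is a caterpillar iff, for `a, b` maximizing
`D i j - t i - t j`, one has `D a b + D i j ≥ max (D a i + D b j) (D a j + D b i)`
for all distinct `i, j ∉ {a, b}`. -/
theorem stmt_4 {n : ℕ} (hn : 3 ≤ n) (C : SimpleGraph (Fin n)) (htree : C.IsTree)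
    (w : Sym2 (Fin n) → ℝ) (hw : PosWeights C w)
    (a b : Fin n) (hab : a ≠ b)
    (hmax : ∀ i j : Fin n, i ≠ j →
      wdist C w i j - tmin C w i - tmin C w j ≤ wdist C w a b - tmin C w a - tmin C w b) :
    IsCaterpillar C ↔
      ∀ i j : Fin n, i ≠ j → i ≠ a → i ≠ b → j ≠ a → j ≠ b →
        max (wdist C w a i + wdist C w b j) (wdist C w a j + wdist C w b i) ≤
          wdist C w a b + wdist C w i j := by
  obtain ⟨g, hg⟩ := exists_isGateMap htree hw (by simpa using hn)
  constructor
  · intro hcat i j hij _ _ _ _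
    have hspine := hcat.wdist_eq_add_of_forall_wdist_le hw (hg.two_le_ncard a)
      (hg.two_le_ncard b) (fun _ _ => hg.wdist_le_of_forall_sub_tmin_le htree hw hab hmax)
      (hg.two_le_ncard i)
    exact max_add_le_of_wdist_eq_add htree hw
      ((hg.wdist_eq_add_iff htree hab (hg.two_le_ncard i)).2 hspine) (hg.wdist_eq hij.symm)
  · intro hineq
    exact isCaterpillar_of_forall_wdist_eq_add htree hw (hg.two_le_ncard a) (hg.two_le_ncard b)
      fun c hc => (hg.wdist_eq_add_iff htree hab hc).1
        (wdist_eq_add_of_forall_max_le htree hw hineq hc)
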